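/- arXiv:1308.1547 — 4 statements merged into one kernel-verified Lean document; each statement's English description precedes it below -/
import Mathlib

section
/- The function z ↦ z·∫_0^∞ e^{-zt}/(t+1) dt has the asymptotic expansion ∑_{n=0}^∞ (-1)^n n!/z^n as z → ∞ along the positive real axis: for every n, the difference between the function and the n-th partial sum is O(z^{-n}) as z → +∞. -/
/-!
Write `I_m(z) = ∫_0^∞ e^{-zt} (t+1)^{-m} dt`. Integrating `d/dt (e^{-zt} (t+1)^{-m})` over
`(0, ∞)` gives `z I_m + m I_{m+1} = 1` for every `m`. Iterating from `m = 1` expresses the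
remainder after `n` terms as `(-1)^n n! z^{-n} · z I_{n+1}(z)`, and `0 ≤ z I_{n+1} ≤ z I_0 = 1`
since the integrands decrease in `m`.
-/

open MeasureTheory Real Filter Asymptotics Set Topology

/-- `e^z E_m(z)`, where `E_m(z) = ∫_1^∞ e^{-zu} u^{-m} du` is the generalized exponential integral
(substitute `u = t + 1`). -/
noncomputable def scaledExpIntegral (z : ℝ) (m : ℕ) : ℝ :=
  ∫ t in Ioi 0, exp (-z * t) / (t + 1) ^ m

lemma exp_div_add_one_pow_nonneg (z : ℝ) (m : ℕ) {t : ℝ} (ht : 0 ≤ t) :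
    0 ≤ exp (-z * t) / (t + 1) ^ m := by
  positivity

lemma exp_div_add_one_pow_le (z : ℝ) (m : ℕ) {t : ℝ} (ht : 0 ≤ t) :
    exp (-z * t) / (t + 1) ^ m ≤ exp (-z * t) :=
  div_le_self (exp_pos _).le (one_le_pow₀ (by linarith))

lemma integrableOn_exp_div_add_one_pow {z : ℝ} (hz : 0 < z) (m : ℕ) :
    IntegrableOn (fun t => exp (-z * t) / (t + 1) ^ m) (Ioi 0) := by
  refine (exp_neg_integrableOn_Ioi 0 hz).mono' ?_ ?_
  · exact (ContinuousOn.div (by fun_prop) (by fun_prop) fun t ht => by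
      have : (0 : ℝ) < t := ht; positivity).aestronglyMeasurable measurableSet_Ioi
  · filter_upwards [ae_restrict_mem measurableSet_Ioi] with t (ht : 0 < t)
    rw [norm_of_nonneg (exp_div_add_one_pow_nonneg z m ht.le)]
    exact exp_div_add_one_pow_le z m ht.le

lemma hasDerivAt_exp_div_add_one_pow (z : ℝ) (m : ℕ) {x : ℝ} (hx : x + 1 ≠ 0) :
    HasDerivAt (fun t => exp (-z * t) / (t + 1) ^ m)
      (-(z * (exp (-z * x) / (x + 1) ^ m) + m * (exp (-z * x) / (x + 1) ^ (m + 1)))) x := by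
  have hexp : HasDerivAt (fun t => exp (-z * t)) (exp (-z * x) * -z) x := by
    simpa using ((hasDerivAt_id x).const_mul (-z)).exp
  have hzpow := (hasDerivAt_zpow (-(m : ℤ)) (x + 1) (Or.inl hx)).comp_add_const x 1
  have hfun : (fun t => exp (-z * t) / (t + 1) ^ m) =
      fun t => exp (-z * t) * (t + 1) ^ (-(m : ℤ)) := by
    simp [div_eq_mul_inv, zpow_neg]
  have hpow : (x + 1) ^ (-(m : ℤ) - 1) = ((x + 1) ^ (m + 1))⁻¹ := by
    rw [← zpow_natCast, ← zpow_neg]; push_cast; ring_nf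
  rw [hfun]
  refine (hexp.mul hzpow).congr_deriv ?_
  rw [hpow, zpow_neg, zpow_natCast]
  field_simp
  push_cast
  ring

lemma tendsto_exp_div_add_one_pow {z : ℝ} (hz : 0 < z) (m : ℕ) :
    Tendsto (fun t => exp (-z * t) / (t + 1) ^ m) atTop (𝓝 0) := by
  have hexp : Tendsto (fun t => exp (-z * t)) atTop (𝓝 0) :=
    tendsto_exp_atBot.comp (tendsto_id.const_mul_atTop_of_neg (neg_neg_iff_pos.2 hz))
  refine tendsto_of_tendsto_of_tendsto_of_le_of_le' tendsto_const_nhds hexp ?_ ?_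
  · filter_upwards [eventually_ge_atTop 0] with t ht using exp_div_add_one_pow_nonneg z m ht
  · filter_upwards [eventually_ge_atTop 0] with t ht using exp_div_add_one_pow_le z m ht

lemma mul_scaledExpIntegral_add {z : ℝ} (hz : 0 < z) (m : ℕ) :
    z * scaledExpIntegral z m + m * scaledExpIntegral z (m + 1) = 1 := by
  have hm := (integrableOn_exp_div_add_one_pow hz m).const_mul z
  have hm1 := (integrableOn_exp_div_add_one_pow hz (m + 1)).const_mul (m : ℝ)
  have hftc := integral_Ioi_of_hasDerivAt_of_tendsto'
    (fun x (hx : 0 ≤ x) => hasDerivAt_exp_div_add_one_pow z m (by linarith)) (hm.add hm1).neg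
    (tendsto_exp_div_add_one_pow hz m)
  rw [integral_neg, integral_add hm hm1, integral_const_mul, integral_const_mul] at hftc
  simp only [mul_zero, exp_zero, zero_add, one_pow, div_one, zero_sub, neg_inj] at hftc
  exact hftc

lemma scaledExpIntegral_nonneg (z : ℝ) (m : ℕ) : 0 ≤ scaledExpIntegral z m :=
  setIntegral_nonneg measurableSet_Ioi fun _ ht => exp_div_add_one_pow_nonneg z m (le_of_lt ht)

lemma mul_scaledExpIntegral_le_one {z : ℝ} (hz : 0 < z) (m : ℕ) :
    z * scaledExpIntegral z m ≤ 1 := by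
  have h0 := mul_scaledExpIntegral_add hz 0
  simp only [CharP.cast_eq_zero, zero_mul, add_zero] at h0
  rw [← h0]
  refine mul_le_mul_of_nonneg_left ?_ hz.le
  refine setIntegral_mono_on (integrableOn_exp_div_add_one_pow hz m)
    (integrableOn_exp_div_add_one_pow hz 0) measurableSet_Ioi fun t ht => ?_
  simpa using exp_div_add_one_pow_le z m (le_of_lt ht)

lemma mul_scaledExpIntegral_one_eq_sum_add {z : ℝ} (hz : 0 < z) (n : ℕ) :
    z * scaledExpIntegral z 1 =
      ∑ k ∈ Finset.range n, (-1 : ℝ) ^ k * k.factorial / z ^ k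
        + (-1) ^ n * n.factorial / z ^ n * (z * scaledExpIntegral z (n + 1)) := by
  induction n with
  | zero => simp
  | succ n ih =>
    have hrec := mul_scaledExpIntegral_add hz (n + 1)
    rw [ih, Finset.sum_range_succ, eq_sub_of_add_eq hrec, Nat.factorial_succ]
    field_simp
    push_cast
    ring

lemma abs_mul_scaledExpIntegral_one_sub_sum_le {z : ℝ} (hz : 0 < z) (n : ℕ) :
    |z * scaledExpIntegral z 1 - ∑ k ∈ Finset.range n, (-1 : ℝ) ^ k * k.factorial / z ^ k|
      ≤ n.factorial / z ^ n := by
  rw [mul_scaledExpIntegral_one_eq_sum_add hz n, add_sub_cancel_left, abs_mul, abs_div,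
    abs_mul, abs_pow, abs_neg, abs_one, one_pow, one_mul, Nat.abs_cast, abs_of_pos (pow_pos hz n),
    abs_of_nonneg (mul_nonneg hz.le (scaledExpIntegral_nonneg z _))]
  exact mul_le_of_le_one_right (by positivity) (mul_scaledExpIntegral_le_one hz _)

theorem exp_integral_asymptotic_expansion (n : ℕ) :
    (fun z : ℝ =>
        (z * ∫ t in Set.Ioi (0 : ℝ), Real.exp (-z * t) / (t + 1)) -
          ∑ k ∈ Finset.range n, (-1 : ℝ) ^ k * (Nat.factorial k) / z ^ k)
      =O[atTop] fun z : ℝ => z ^ (-(n : ℝ)) := by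
  refine IsBigO.of_bound n.factorial ?_
  filter_upwards [eventually_gt_atTop 0] with z hz
  have h := abs_mul_scaledExpIntegral_one_sub_sum_le hz n
  simp only [scaledExpIntegral, pow_one] at h
  rw [norm_eq_abs, norm_of_nonneg (by positivity), rpow_neg hz.le, rpow_natCast]
  simpa [div_eq_mul_inv] using h
end

section
/- Watson's lemma (real version): Let f be continuous on [0,∞) with f(t) = ∑_{n=0}^{N-1} a_n t^n + O(t^N) as t → 0+, and suppose |f(t)| ≤ M e^{σ t} for all t ≥ 0 for some constants M, σ. Then for real z → +∞, ∫_0^∞ t^{λ-1} f(t) e^{-zt} dt = ∑_{n=0}^{N-1} a_n Γ(n+λ)/z^{n+λ} + O(z^{-N-λ}), where λ > 0. -/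
open MeasureTheory Real Filter Asymptotics Set Topology

/-!
Subtracting the Taylor polynomial `P` of `f` changes the integral by exactly the sum of
`Γ`-terms, since `∫₀^∞ t^(n+λ-1) e^(-zt) dt = Γ(n+λ)/z^(n+λ)`. The remainder `g = f - P` is
`O(t^N)` near `0`, so on `(0, d]` its contribution is at most `C Γ(N+λ) z^(-N-λ)`; on `(d, ∞)`
the Laplace integral converges absolutely at some `z₀`, and the extra factor
`e^(-(z-z₀)t) ≤ e^(-(z-z₀)d)` makes that part exponentially small in `z`.
-/

namespace Watson

lemma integrableOn_rpow_mul_exp_neg_mul {s z : ℝ} (hs : 0 < s) (hz : 0 < z) :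
    IntegrableOn (fun t : ℝ => t ^ (s - 1) * exp (-z * t)) (Ioi 0) := by
  simpa only [rpow_one] using
    integrableOn_rpow_mul_exp_neg_mul_rpow (p := 1) (by linarith) one_pos hz

lemma integral_rpow_mul_exp_neg_mul {s z : ℝ} (hs : 0 < s) (hz : 0 < z) :
    ∫ t in Ioi (0 : ℝ), t ^ (s - 1) * exp (-z * t) = Gamma s / z ^ s := by
  simp only [neg_mul]
  rw [integral_rpow_mul_exp_neg_mul_Ioi hs hz, one_div, inv_rpow hz.le, inv_mul_eq_div]

lemma rpow_sub_one_mul_rpow {t : ℝ} (ht : 0 < t) (s r : ℝ) :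
    t ^ (s - 1) * t ^ r = t ^ (r + s - 1) := by
  rw [← rpow_add ht]
  ring_nf

section Polynomial

variable {s z : ℝ}

lemma integrableOn_laplace_pow (hs : 0 < s) (hz : 0 < z) (n : ℕ) :
    IntegrableOn (fun t : ℝ => t ^ (s - 1) * t ^ n * exp (-z * t)) (Ioi 0) := by
  refine (integrableOn_rpow_mul_exp_neg_mul (s := n + s) (by positivity) hz).congr_fun
    (fun t ht => ?_) measurableSet_Ioi
  rw [← rpow_natCast, rpow_sub_one_mul_rpow ht]

lemma integral_laplace_pow (hs : 0 < s) (hz : 0 < z) (n : ℕ) :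
    ∫ t in Ioi (0 : ℝ), t ^ (s - 1) * t ^ n * exp (-z * t) = Gamma (n + s) / z ^ (n + s) := by
  rw [← integral_rpow_mul_exp_neg_mul (by positivity) hz]
  refine setIntegral_congr_fun measurableSet_Ioi fun t ht => ?_
  rw [← rpow_natCast, rpow_sub_one_mul_rpow ht]

lemma laplace_polynomial_eq_sum (a : ℕ → ℝ) (N : ℕ) (t : ℝ) :
    t ^ (s - 1) * (∑ n ∈ Finset.range N, a n * t ^ n) * exp (-z * t) =
      ∑ n ∈ Finset.range N, a n * (t ^ (s - 1) * t ^ n * exp (-z * t)) := by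
  rw [Finset.mul_sum, Finset.sum_mul]
  exact Finset.sum_congr rfl fun n _ => by ring

lemma integrableOn_laplace_polynomial (hs : 0 < s) (hz : 0 < z) (a : ℕ → ℝ) (N : ℕ) :
    IntegrableOn (fun t : ℝ => t ^ (s - 1) * (∑ n ∈ Finset.range N, a n * t ^ n) * exp (-z * t))
      (Ioi 0) := by
  simp only [laplace_polynomial_eq_sum]
  exact integrable_finsetSum _ fun n _ => (integrableOn_laplace_pow hs hz n).const_mul (a n)

lemma integral_laplace_polynomial (hs : 0 < s) (hz : 0 < z) (a : ℕ → ℝ) (N : ℕ) :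
    ∫ t in Ioi (0 : ℝ), t ^ (s - 1) * (∑ n ∈ Finset.range N, a n * t ^ n) * exp (-z * t) =
      ∑ n ∈ Finset.range N, a n * Gamma (n + s) / z ^ (n + s) := by
  simp only [laplace_polynomial_eq_sum]
  rw [integral_finsetSum _ fun n _ => (integrableOn_laplace_pow hs hz n).const_mul (a n)]
  refine Finset.sum_congr rfl fun n _ => ?_
  rw [integral_const_mul, integral_laplace_pow hs hz, mul_div_assoc]

end Polynomial

section Remainder

variable {g : ℝ → ℝ} {s z₀ z : ℝ}

lemma integrableOn_laplace_of_abs_le_exp {M σ : ℝ} (hs : 0 < s)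
    (hg : AEStronglyMeasurable g (volume.restrict (Ioi 0)))
    (hbound : ∀ t > 0, |g t| ≤ M * exp (σ * t)) (hz : σ < z) :
    IntegrableOn (fun t => t ^ (s - 1) * g t * exp (-z * t)) (Ioi 0) := by
  have hmeas : AEStronglyMeasurable (fun t => t ^ (s - 1) * g t * exp (-z * t))
      (volume.restrict (Ioi 0)) :=
    (((continuousOn_id.rpow_const fun t ht => Or.inl (ne_of_gt ht)).aestronglyMeasurable
      measurableSet_Ioi).mul hg).mul
      (by fun_prop : Continuous fun t => exp (-z * t)).aestronglyMeasurable
  refine ((integrableOn_rpow_mul_exp_neg_mul hs (sub_pos.2 hz)).const_mul M).mono' hmeas ?_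
  filter_upwards [ae_restrict_mem measurableSet_Ioi] with t ht
  have hts : 0 ≤ t ^ (s - 1) := rpow_nonneg (le_of_lt ht) _
  calc ‖t ^ (s - 1) * g t * exp (-z * t)‖ = t ^ (s - 1) * |g t| * exp (-z * t) := by
        rw [norm_mul, norm_mul, norm_of_nonneg hts, norm_of_nonneg (exp_pos _).le, norm_eq_abs]
    _ ≤ t ^ (s - 1) * (M * exp (σ * t)) * exp (-z * t) := by gcongr; exact hbound t ht
    _ = M * (t ^ (s - 1) * exp (-(z - σ) * t)) := by
        rw [mul_assoc, mul_assoc, ← exp_add]; ring_nf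

lemma laplace_integrand_eq_exp_mul (t : ℝ) :
    t ^ (s - 1) * g t * exp (-z * t) =
      exp (-(z - z₀) * t) * (t ^ (s - 1) * g t * exp (-z₀ * t)) := by
  rw [mul_left_comm, mul_assoc, ← exp_add]
  ring_nf

lemma integrableOn_laplace_of_le
    (h : IntegrableOn (fun t => t ^ (s - 1) * g t * exp (-z₀ * t)) (Ioi 0)) (hz : z₀ ≤ z) :
    IntegrableOn (fun t => t ^ (s - 1) * g t * exp (-z * t)) (Ioi 0) := by
  refine IntegrableOn.congr_fun ?_ (fun t _ => (laplace_integrand_eq_exp_mul (z₀ := z₀) t).symm)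
    measurableSet_Ioi
  refine h.bdd_mul (c := 1) (by fun_prop : Continuous _).aestronglyMeasurable ?_
  filter_upwards [ae_restrict_mem measurableSet_Ioi] with t ht
  rw [norm_of_nonneg (exp_pos _).le, exp_le_one_iff]
  nlinarith [le_of_lt (show (0 : ℝ) < t from ht)]

lemma laplace_Ioi_isBigO_exp {d : ℝ} (hd : 0 ≤ d)
    (h : IntegrableOn (fun t => t ^ (s - 1) * g t * exp (-z₀ * t)) (Ioi 0)) :
    (fun z => ∫ t in Ioi d, t ^ (s - 1) * g t * exp (-z * t)) =O[atTop] fun z => exp (-d * z) := by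
  set I := ∫ t in Ioi d, ‖t ^ (s - 1) * g t * exp (-z₀ * t)‖
  have hd_int := (h.mono_set (Ioi_subset_Ioi hd)).norm
  refine IsBigO.of_bound (exp (z₀ * d) * I) ?_
  filter_upwards [eventually_ge_atTop z₀] with z hz
  calc ‖∫ t in Ioi d, t ^ (s - 1) * g t * exp (-z * t)‖
      ≤ ∫ t in Ioi d, exp (-(z - z₀) * d) * ‖t ^ (s - 1) * g t * exp (-z₀ * t)‖ := by
        refine norm_integral_le_of_norm_le (hd_int.const_mul _) ?_
        filter_upwards [ae_restrict_mem measurableSet_Ioi] with t ht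
        rw [laplace_integrand_eq_exp_mul (z₀ := z₀), norm_mul, norm_of_nonneg (exp_pos _).le]
        refine mul_le_mul_of_nonneg_right (exp_le_exp.2 ?_) (norm_nonneg _)
        nlinarith [show d < t from ht]
    _ = exp (z₀ * d) * I * ‖exp (-d * z)‖ := by
        rw [integral_const_mul, norm_of_nonneg (exp_pos _).le, mul_right_comm, ← exp_add]
        congr 2
        ring

lemma norm_integral_Ioc_laplace_le {r C d : ℝ} (hrs : 0 < r + s) (hz : 0 < z) (hC : 0 ≤ C)
    (hg : ∀ t ∈ Ioc 0 d, |g t| ≤ C * t ^ r) :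
    ‖∫ t in Ioc 0 d, t ^ (s - 1) * g t * exp (-z * t)‖ ≤ C * Gamma (r + s) * z ^ (-r - s) := by
  have hint : IntegrableOn (fun t => C * (t ^ (r + s - 1) * exp (-z * t))) (Ioi 0) :=
    (integrableOn_rpow_mul_exp_neg_mul hrs hz).const_mul C
  calc ‖∫ t in Ioc 0 d, t ^ (s - 1) * g t * exp (-z * t)‖
      ≤ ∫ t in Ioc 0 d, C * (t ^ (r + s - 1) * exp (-z * t)) := by
        refine norm_integral_le_of_norm_le (hint.mono_set Ioc_subset_Ioi_self) ?_
        filter_upwards [ae_restrict_mem measurableSet_Ioc] with t ht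
        have hts : 0 ≤ t ^ (s - 1) := rpow_nonneg ht.1.le _
        rw [norm_mul, norm_mul, norm_of_nonneg hts, norm_of_nonneg (exp_pos _).le, norm_eq_abs,
          ← rpow_sub_one_mul_rpow ht.1]
        calc t ^ (s - 1) * |g t| * exp (-z * t) ≤ t ^ (s - 1) * (C * t ^ r) * exp (-z * t) := by
              gcongr; exact hg t ht
          _ = _ := by ring
    _ ≤ ∫ t in Ioi 0, C * (t ^ (r + s - 1) * exp (-z * t)) := by
        refine setIntegral_mono_set hint ?_ Ioc_subset_Ioi_self.eventuallyLE
        filter_upwards [ae_restrict_mem measurableSet_Ioi] with t ht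
        have ht : (0 : ℝ) < t := ht
        positivity
    _ = C * Gamma (r + s) * z ^ (-r - s) := by
        rw [integral_const_mul, integral_rpow_mul_exp_neg_mul hrs hz, neg_sub_left, rpow_neg hz.le,
          add_comm s, div_eq_mul_inv, mul_assoc]

theorem laplace_isBigO_of_isBigO_nhdsGT {r : ℝ} (hrs : 0 < r + s)
    (hint : IntegrableOn (fun t => t ^ (s - 1) * g t * exp (-z₀ * t)) (Ioi 0))
    (hg : g =O[𝓝[>] 0] fun t => t ^ r) :
    (fun z => ∫ t in Ioi 0, t ^ (s - 1) * g t * exp (-z * t)) =O[atTop] fun z => z ^ (-r - s) := by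
  obtain ⟨C, hC, hCg⟩ := hg.exists_nonneg
  obtain ⟨d, hd, hdsub⟩ := mem_nhdsGT_iff_exists_Ioc_subset.1 hCg.bound
  have hnear : (fun z => ∫ t in Ioc 0 d, t ^ (s - 1) * g t * exp (-z * t))
      =O[atTop] fun z => z ^ (-r - s) := by
    refine IsBigO.of_bound (C * Gamma (r + s)) ?_
    filter_upwards [eventually_gt_atTop 0] with z hz
    rw [norm_of_nonneg (rpow_nonneg hz.le _)]
    refine norm_integral_Ioc_laplace_le hrs hz hC fun t ht => ?_
    simpa [abs_of_nonneg (rpow_nonneg ht.1.le r)] using hdsub ht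
  have hfar := (laplace_Ioi_isBigO_exp (le_of_lt hd) hint).trans
    (isLittleO_exp_neg_mul_rpow_atTop hd (-r - s)).isBigO
  refine (hnear.add hfar).congr' ?_ EventuallyEq.rfl
  filter_upwards [eventually_ge_atTop z₀] with z hz
  have hzint := integrableOn_laplace_of_le hint hz
  rw [← setIntegral_union (Ioc_disjoint_Ioi le_rfl) measurableSet_Ioi
    (hzint.mono_set Ioc_subset_Ioi_self) (hzint.mono_set (Ioi_subset_Ioi (le_of_lt hd))),
    Ioc_union_Ioi_eq_Ioi (le_of_lt hd)]

end Remainder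

end Watson

open Watson

theorem watson_lemma (f : ℝ → ℝ) (a : ℕ → ℝ) (N : ℕ) (lam M σ : ℝ) (hlam : 0 < lam)
    (hf : ContinuousOn f (Set.Ici 0))
    (hbound : ∀ t ≥ (0 : ℝ), |f t| ≤ M * Real.exp (σ * t))
    (hasymp : (fun t : ℝ => f t - ∑ n ∈ Finset.range N, a n * t ^ n)
        =O[nhdsWithin 0 (Set.Ioi 0)] fun t : ℝ => t ^ N) :
    (fun z : ℝ =>
        (∫ t in Set.Ioi (0 : ℝ), t ^ (lam - 1) * f t * Real.exp (-z * t)) -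
          ∑ n ∈ Finset.range N, a n * Real.Gamma ((n : ℝ) + lam) / z ^ ((n : ℝ) + lam))
      =O[atTop] fun z : ℝ => z ^ (-(N : ℝ) - lam) := by
  have hfint : ∀ z, σ < z → IntegrableOn (fun t => t ^ (lam - 1) * f t * exp (-z * t)) (Ioi 0) :=
    fun z hz => integrableOn_laplace_of_abs_le_exp hlam
      ((hf.mono Ioi_subset_Ici_self).aestronglyMeasurable measurableSet_Ioi)
      (fun t ht => hbound t ht.le) hz
  set z₀ := |σ| + 1
  have hz₀σ : σ < z₀ := by linarith [le_abs_self σ]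
  have hz₀ : 0 < z₀ := by positivity
  have hrem := laplace_isBigO_of_isBigO_nhdsGT
    (g := fun t => f t - ∑ n ∈ Finset.range N, a n * t ^ n) (by positivity : 0 < (N : ℝ) + lam)
    (((hfint z₀ hz₀σ).sub (integrableOn_laplace_polynomial hlam hz₀ a N)).congr_fun
      (fun t _ => by simp only [Pi.sub_apply]; ring) measurableSet_Ioi)
    (hasymp.congr_right fun t => (rpow_natCast t N).symm)
  refine hrem.congr' ?_ EventuallyEq.rfl
  filter_upwards [eventually_ge_atTop z₀] with z hz
  rw [← integral_laplace_polynomial hlam (by linarith) a N,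
    ← integral_sub (hfint z (by linarith)) (integrableOn_laplace_polynomial hlam (by linarith) a N)]
  exact integral_congr_ae (Eventually.of_forall fun t => by simp only; ring)
end

section
/- For z > 0 and any nonnegative integer N, let f: ℝ → ℝ be continuous, even, and satisfy f(t) = ∑_{k=0}^{2N-1} c_k t^k + O(t^{2N}) uniformly for t ∈ ℝ with |f(t)| ≤ M e^{σ t²} for some σ < z/2. Then ∫_{-∞}^∞ e^{-z t²} f(t) dt = √(π/z) ∑_{k=0}^{N-1} (1/2)_k c_{2k} z^{-k} + O(z^{-N-1/2}) as z → +∞, where (1/2)_k is Pochhammer's symbol. -/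
open MeasureTheory Real Filter Asymptotics

/-- Pochhammer's symbol `(1/2)_k = (1/2)(3/2)⋯(k - 1/2)`. -/
noncomputable def pochHalf (k : ℕ) : ℝ := ∏ i ∈ Finset.range k, ((1 : ℝ) / 2 + i)

/-!
Subtract the Taylor polynomial `P` of `f`. Against the Gaussian weight `exp (-z t²)` the odd
monomials of `P` integrate to zero and `t ^ (2k)` integrates to `√(π/z) (1/2)_k z^{-k}`, which is
the main term. The remainder is bounded pointwise by `C |t| ^ (2N)`, so its weighted integral is at
most `C` times the moment of order `2N`, that is `O(z ^ (-N - 1/2))`.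
-/

theorem Finset.sum_range_two_mul {M : Type*} [AddCommMonoid M] (h : ℕ → M) (n : ℕ) :
    ∑ k ∈ Finset.range (2 * n), h k = ∑ j ∈ Finset.range n, (h (2 * j) + h (2 * j + 1)) := by
  induction n with
  | zero => simp
  | succ n ih =>
    rw [Finset.sum_range_succ, ← ih, Nat.mul_succ, Finset.sum_range_succ, Finset.sum_range_succ,
      add_assoc]

theorem integral_eq_zero_of_odd {G E : Type*} [MeasurableSpace G] [AddGroup G] [MeasurableNeg G]
    [NormedAddCommGroup E] [NormedSpace ℝ E] (μ : Measure G) [μ.IsNegInvariant] {g : G → E}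
    (hg : ∀ x, g (-x) = -g x) : ∫ x, g x ∂μ = 0 := by
  have h := integral_neg_eq_self g μ
  simp only [hg, integral_neg] at h
  have h2 : (2 : ℝ) • ∫ x, g x ∂μ = 0 := by
    rw [two_smul]
    nth_rewrite 1 [← h]
    exact neg_add_cancel _
  exact (smul_eq_zero.mp h2).resolve_left two_ne_zero

theorem Real.Gamma_nat_add_half_eq_pochHalf (k : ℕ) : Gamma (k + 1 / 2) = pochHalf k * √π := by
  induction k with
  | zero => simpa [pochHalf] using Gamma_one_half_eq
  | succ k ih =>
    rw [Nat.cast_succ, add_right_comm, Gamma_add_one (by positivity), ih]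
    simp only [pochHalf, Finset.prod_range_succ]
    ring

theorem Real.sqrt_pi_div_div_pow {z : ℝ} (hz : 0 < z) (k : ℕ) :
    √(π / z) / z ^ k = √π * z ^ (-(k : ℝ) - 1 / 2) := by
  rw [sub_eq_add_neg, rpow_add hz, rpow_neg hz.le, rpow_natCast, rpow_neg hz.le, ← sqrt_eq_rpow,
    sqrt_div pi_pos.le]
  ring

section GaussianMoments

variable {z : ℝ}

theorem integrable_exp_neg_mul_sq_mul_pow (hz : 0 < z) (k : ℕ) :
    Integrable fun t : ℝ => exp (-z * t ^ 2) * t ^ k := by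
  have h := integrable_rpow_mul_exp_neg_mul_sq hz (s := k)
    (neg_one_lt_zero.trans_le k.cast_nonneg)
  simp only [rpow_natCast] at h
  exact h.congr (ae_of_all _ fun t => mul_comm _ _)

theorem integral_exp_neg_mul_sq_mul_pow_of_odd {k : ℕ} (hk : Odd k) :
    ∫ t : ℝ, exp (-z * t ^ 2) * t ^ k = 0 :=
  integral_eq_zero_of_odd volume fun t => by rw [neg_sq, hk.neg_pow, mul_neg]

theorem integral_exp_neg_mul_sq_mul_pow_two_mul (hz : 0 < z) (k : ℕ) :
    ∫ t : ℝ, exp (-z * t ^ 2) * t ^ (2 * k) = √π * pochHalf k * z ^ (-(k : ℝ) - 1 / 2) := by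
  have heven : ∀ t : ℝ, exp (-z * t ^ 2) * t ^ (2 * k) = exp (-z * |t| ^ 2) * |t| ^ (2 * k) :=
    fun t => by rw [sq_abs, (even_two_mul k).pow_abs]
  rw [integral_congr_ae (ae_of_all _ heven),
    integral_comp_abs (f := fun t => exp (-z * t ^ 2) * t ^ (2 * k))]
  have hIoi : ∫ t in Set.Ioi (0 : ℝ), exp (-z * t ^ 2) * t ^ (2 * k) =
      ∫ t in Set.Ioi (0 : ℝ), t ^ ((2 * k : ℕ) : ℝ) * exp (-z * t ^ (2 : ℝ)) := by
    refine setIntegral_congr_fun measurableSet_Ioi fun t _ => ?_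
    rw [rpow_natCast, rpow_two, mul_comm]
  rw [hIoi, integral_rpow_mul_exp_neg_mul_rpow two_pos
    (neg_one_lt_zero.trans_le (Nat.cast_nonneg _)) hz,
    show (((2 * k : ℕ) : ℝ) + 1) / 2 = k + 1 / 2 by push_cast; ring,
    show -(((2 * k : ℕ) : ℝ) + 1) / 2 = -(k : ℝ) - 1 / 2 by push_cast; ring,
    Gamma_nat_add_half_eq_pochHalf]
  ring

theorem integral_exp_neg_mul_sq_mul_sum_pow (hz : 0 < z) (c : ℕ → ℝ) (N : ℕ) :
    ∫ t : ℝ, exp (-z * t ^ 2) * ∑ k ∈ Finset.range (2 * N), c k * t ^ k =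
      √(π / z) * ∑ k ∈ Finset.range N, pochHalf k * c (2 * k) / z ^ k := by
  have hterm : ∀ k, Integrable fun t : ℝ => c k * (exp (-z * t ^ 2) * t ^ k) :=
    fun k => (integrable_exp_neg_mul_sq_mul_pow hz k).const_mul (c k)
  simp_rw [Finset.mul_sum, mul_left_comm (exp _)]
  rw [integral_finsetSum _ fun k _ => hterm k, Finset.sum_range_two_mul]
  refine Finset.sum_congr rfl fun k _ => ?_
  rw [integral_const_mul, integral_const_mul,
    integral_exp_neg_mul_sq_mul_pow_of_odd (odd_two_mul_add_one k),
    integral_exp_neg_mul_sq_mul_pow_two_mul hz]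
  linear_combination (-(pochHalf k * c (2 * k))) * sqrt_pi_div_div_pow hz k

theorem norm_exp_neg_mul_sq_mul_le_of_abs_le {g : ℝ → ℝ} {C t : ℝ} {n : ℕ}
    (hC : |g t| ≤ C * |t| ^ (2 * n)) :
    ‖exp (-z * t ^ 2) * g t‖ ≤ C * (exp (-z * t ^ 2) * t ^ (2 * n)) :=
  calc ‖exp (-z * t ^ 2) * g t‖ = exp (-z * t ^ 2) * |g t| := by
        rw [norm_mul, norm_of_nonneg (exp_pos _).le, norm_eq_abs]
    _ ≤ exp (-z * t ^ 2) * (C * |t| ^ (2 * n)) := by gcongr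
    _ = C * (exp (-z * t ^ 2) * t ^ (2 * n)) := by rw [(even_two_mul n).pow_abs]; ring

theorem integrable_exp_neg_mul_sq_mul_of_abs_le (hz : 0 < z) {g : ℝ → ℝ}
    (hg : AEStronglyMeasurable g) {C : ℝ} {n : ℕ} (hC : ∀ t, |g t| ≤ C * |t| ^ (2 * n)) :
    Integrable fun t : ℝ => exp (-z * t ^ 2) * g t :=
  ((integrable_exp_neg_mul_sq_mul_pow hz (2 * n)).const_mul C).mono'
    ((by fun_prop : Continuous fun t : ℝ => exp (-z * t ^ 2)).aestronglyMeasurable.mul hg)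
    (ae_of_all _ fun t => norm_exp_neg_mul_sq_mul_le_of_abs_le (hC t))

theorem norm_integral_exp_neg_mul_sq_mul_le (hz : 0 < z) {g : ℝ → ℝ} {C : ℝ} {n : ℕ}
    (hC : ∀ t, |g t| ≤ C * |t| ^ (2 * n)) :
    ‖∫ t : ℝ, exp (-z * t ^ 2) * g t‖ ≤ C * √π * pochHalf n * z ^ (-(n : ℝ) - 1 / 2) :=
  calc ‖∫ t : ℝ, exp (-z * t ^ 2) * g t‖
      ≤ ∫ t : ℝ, C * (exp (-z * t ^ 2) * t ^ (2 * n)) :=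
        norm_integral_le_of_norm_le ((integrable_exp_neg_mul_sq_mul_pow hz (2 * n)).const_mul C)
          (ae_of_all _ fun t => norm_exp_neg_mul_sq_mul_le_of_abs_le (hC t))
    _ = C * √π * pochHalf n * z ^ (-(n : ℝ) - 1 / 2) := by
        rw [integral_const_mul, integral_exp_neg_mul_sq_mul_pow_two_mul hz]
        ring

end GaussianMoments

theorem laplace_method_general (N : ℕ) (f : ℝ → ℝ) (c : ℕ → ℝ)
    (hf : Continuous f)
    (htaylor : ∃ C : ℝ, ∀ t : ℝ,
      |f t - ∑ k ∈ Finset.range (2 * N), c k * t ^ k| ≤ C * |t| ^ (2 * N)) :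
    (fun z : ℝ =>
        (∫ t : ℝ, Real.exp (-z * t ^ 2) * f t) -
          Real.sqrt (π / z) * ∑ k ∈ Finset.range N, pochHalf k * c (2 * k) / z ^ k)
      =O[atTop] fun z : ℝ => z ^ (-(N : ℝ) - 1/2) := by
  obtain ⟨C, hC⟩ := htaylor
  set P : ℝ → ℝ := fun t => ∑ k ∈ Finset.range (2 * N), c k * t ^ k
  refine IsBigO.of_bound (C * √π * pochHalf N) ?_
  filter_upwards [eventually_gt_atTop 0] with z hz
  have hR : Integrable fun t => exp (-z * t ^ 2) * (f t - P t) :=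
    integrable_exp_neg_mul_sq_mul_of_abs_le hz (hf.sub (by fun_prop)).aestronglyMeasurable hC
  have hP : Integrable fun t => exp (-z * t ^ 2) * P t := by
    simp only [P, Finset.mul_sum]
    exact integrable_finsetSum _ fun k _ =>
      ((integrable_exp_neg_mul_sq_mul_pow hz k).const_mul (c k)).congr
        (ae_of_all _ fun t => by ring)
  have hsplit : ∫ t, exp (-z * t ^ 2) * f t =
      (∫ t, exp (-z * t ^ 2) * (f t - P t)) + ∫ t, exp (-z * t ^ 2) * P t := by
    rw [← integral_add hR hP]
    congr 1 with t
    ring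
  rw [hsplit, integral_exp_neg_mul_sq_mul_sum_pow hz, add_sub_cancel_right,
    norm_of_nonneg (rpow_nonneg hz.le _)]
  exact norm_integral_exp_neg_mul_sq_mul_le hz hC

theorem laplace_method (N : ℕ) (f : ℝ → ℝ) (c : ℕ → ℝ) (M σ : ℝ)
    (hf : Continuous f) (heven : ∀ t : ℝ, f (-t) = f t)
    (htaylor : ∃ C : ℝ, ∀ t : ℝ,
      |f t - ∑ k ∈ Finset.range (2 * N), c k * t ^ k| ≤ C * |t| ^ (2 * N))
    (hbound : ∀ t : ℝ, |f t| ≤ M * Real.exp (σ * t ^ 2)) :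
    (fun z : ℝ =>
        (∫ t : ℝ, Real.exp (-z * t ^ 2) * f t) -
          Real.sqrt (π / z) * ∑ k ∈ Finset.range N, pochHalf k * c (2 * k) / z ^ k)
      =O[atTop] fun z : ℝ => z ^ (-(N : ℝ) - 1/2) :=
  laplace_method_general N f c hf htaylor
end

section
/- For n ≥ 1 and complex z with z ≠ 1 and |z| ≤ 1, the partial sum S_n(z) = ∑_{k=1}^n z^k/k satisfies S_n(z) = −log(1−z) − z^{n+1} ∫_0^∞ e^{-ns}/(e^s − z) ds. -/
/-!
Put `I(a) = ∫₀^∞ e^{-as} / (e^s - z) ds`. Writing `e^{-as} = e^{-(a+1)s} ((e^s - z) + z)` gives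
`I(a) = 1/(a+1) + z I(a+1)`, which is the induction step from `n` to `n + 1`. The base case
`z I(0) = -log (1 - z)` is the fundamental theorem of calculus for `log (1 - z e^{-s})`, whose
derivative is `z / (e^s - z)`. All integrals converge because `‖e^s - z‖ ≥ ‖1 - z‖ e^s / 4` for
`s ≥ 0`: as `Re (1 - z) ≥ 0`, adding the real number `e^s - 1 ≥ 0` cannot decrease `‖1 - z‖`.
-/

open MeasureTheory Complex
open Set Filter Topology

lemma Complex.norm_le_norm_ofReal_add {w : ℂ} (hw : 0 ≤ w.re) {a : ℝ} (ha : 0 ≤ a) :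
    ‖w‖ ≤ ‖(a : ℂ) + w‖ := by
  rw [← sq_le_sq₀ (norm_nonneg _) (norm_nonneg _), Complex.sq_norm, Complex.sq_norm,
    normSq_apply, normSq_apply]
  simp only [add_re, add_im, ofReal_re, ofReal_im, zero_add]
  nlinarith

lemma Complex.mem_slitPlane_of_re_nonneg {w : ℂ} (hw : 0 ≤ w.re) (h0 : w ≠ 0) :
    w ∈ slitPlane := by
  rw [mem_slitPlane_iff]
  by_contra! h
  exact h0 (Complex.ext (by simp; linarith [h.1]) h.2)

lemma integral_exp_neg_mul_Ioi_zero {b : ℝ} (hb : 0 < b) :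
    ∫ s in Ioi (0 : ℝ), Real.exp (-b * s) = b⁻¹ := by
  have := integral_exp_mul_complex_Ioi (a := -b) (by simpa using hb) 0
  simp only [ofReal_zero, mul_zero, Complex.exp_zero] at this
  rw [← ofReal_inj, ← integral_complex_ofReal]
  push_cast
  simpa [neg_div_neg_eq] using this

noncomputable def expSubIntegral (z : ℂ) (a : ℝ) : ℂ :=
  ∫ s in Ioi (0 : ℝ), (Real.exp (-a * s) : ℂ) / ((Real.exp s : ℂ) - z)

section

variable {z : ℂ}

lemma norm_one_sub_le_norm_exp_sub (hz1 : ‖z‖ ≤ 1) {s : ℝ} (hs : 0 ≤ s) :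
    ‖1 - z‖ ≤ ‖(Real.exp s : ℂ) - z‖ := by
  have hre : 0 ≤ (1 - z).re := by
    simpa using (re_le_norm z).trans hz1
  simpa [← sub_add_sub_cancel (Real.exp s : ℂ) 1 z] using
    norm_le_norm_ofReal_add hre (sub_nonneg.2 (Real.one_le_exp hs))

lemma norm_one_sub_mul_exp_le_norm_exp_sub (hz1 : ‖z‖ ≤ 1) {s : ℝ} (hs : 0 ≤ s) :
    ‖1 - z‖ / 4 * Real.exp s ≤ ‖(Real.exp s : ℂ) - z‖ := by
  have h_near := norm_one_sub_le_norm_exp_sub hz1 hs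
  have h_far : Real.exp s - 1 ≤ ‖(Real.exp s : ℂ) - z‖ := by
    have := norm_sub_norm_le (Real.exp s : ℂ) z
    rw [norm_real, Real.norm_of_nonneg (Real.exp_nonneg s)] at this
    linarith
  have h_two : ‖1 - z‖ ≤ 2 := (norm_sub_le _ _).trans (by simp; linarith)
  -- `h_near` wins while `exp s ≤ 2`, `h_far` afterwards
  rcases le_total (Real.exp s) 2 with h | h <;> nlinarith [norm_nonneg (1 - z)]

lemma exp_sub_ne_zero (hz : z ≠ 1) (hz1 : ‖z‖ ≤ 1) {s : ℝ} (hs : 0 ≤ s) :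
    (Real.exp s : ℂ) - z ≠ 0 := by
  rw [← norm_pos_iff]
  exact (norm_pos_iff.2 (sub_ne_zero.2 hz.symm)).trans_le (norm_one_sub_le_norm_exp_sub hz1 hs)

lemma exp_sub_eq_exp_mul_one_sub (s : ℝ) :
    (Real.exp s : ℂ) - z = Real.exp s * (1 - z * Real.exp (-s)) := by
  rw [mul_sub, mul_one, mul_left_comm, ← ofReal_mul, ← Real.exp_add, add_neg_cancel,
    Real.exp_zero, ofReal_one, mul_one]

lemma one_sub_mul_exp_neg_mem_slitPlane (hz : z ≠ 1) (hz1 : ‖z‖ ≤ 1) {s : ℝ} (hs : 0 ≤ s) :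
    1 - z * Real.exp (-s) ∈ slitPlane := by
  refine mem_slitPlane_of_re_nonneg ?_ fun h => exp_sub_ne_zero hz hz1 hs ?_
  · have : z.re * Real.exp (-s) ≤ 1 :=
      mul_le_one₀ ((re_le_norm z).trans hz1) (Real.exp_nonneg _)
        (Real.exp_le_one_iff.2 (by linarith))
    simpa [← ofReal_exp] using this
  · rw [exp_sub_eq_exp_mul_one_sub, h, mul_zero]

lemma integrableOn_exp_neg_mul_div_exp_sub (hz : z ≠ 1) (hz1 : ‖z‖ ≤ 1) {a : ℝ}
    (ha : -1 < a) :
    IntegrableOn (fun s : ℝ => (Real.exp (-a * s) : ℂ) / ((Real.exp s : ℂ) - z)) (Ioi 0) := by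
  have hc : 0 < ‖1 - z‖ := norm_pos_iff.2 (sub_ne_zero.2 hz.symm)
  refine ((exp_neg_integrableOn_Ioi 0 (by linarith : 0 < a + 1)).const_mul
    (4 / ‖1 - z‖)).mono' ?_ ?_
  · refine ContinuousOn.aestronglyMeasurable ?_ measurableSet_Ioi
    exact ContinuousOn.div (by fun_prop) (by fun_prop)
      fun s hs => exp_sub_ne_zero hz hz1 (le_of_lt hs)
  · filter_upwards [ae_restrict_mem measurableSet_Ioi] with s hs
    have hlow := norm_one_sub_mul_exp_le_norm_exp_sub hz1 (le_of_lt hs)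
    rw [norm_div, norm_real, Real.norm_of_nonneg (Real.exp_nonneg _)]
    calc Real.exp (-a * s) / ‖(Real.exp s : ℂ) - z‖
        ≤ Real.exp (-a * s) / (‖1 - z‖ / 4 * Real.exp s) := by gcongr
      _ = 4 / ‖1 - z‖ * Real.exp (-(a + 1) * s) := by
          rw [show -(a + 1) * s = -a * s + -s by ring, Real.exp_add, Real.exp_neg]
          field_simp

lemma hasDerivAt_log_one_sub_mul_exp_neg (hz : z ≠ 1) (hz1 : ‖z‖ ≤ 1) {s : ℝ} (hs : 0 ≤ s) :
    HasDerivAt (fun t : ℝ => Complex.log (1 - z * Real.exp (-t)))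
      (z / ((Real.exp s : ℂ) - z)) s := by
  have hinner : HasDerivAt (fun t : ℝ => 1 - z * (Real.exp (-t) : ℂ))
      (z * Real.exp (-s)) s := by
    have := (((Real.hasDerivAt_exp (-s)).comp s (hasDerivAt_neg s)).ofReal_comp.const_mul
      z).const_sub 1
    simpa [Function.comp_def] using this
  convert hinner.clog_real (one_sub_mul_exp_neg_mem_slitPlane hz hz1 hs) using 1
  rw [exp_sub_eq_exp_mul_one_sub, ← div_div, Real.exp_neg, ofReal_inv, div_eq_mul_inv z]

lemma mul_expSubIntegral_zero (hz : z ≠ 1) (hz1 : ‖z‖ ≤ 1) :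
    z * expSubIntegral z 0 = -Complex.log (1 - z) := by
  have hint : IntegrableOn (fun s : ℝ => z / ((Real.exp s : ℂ) - z)) (Ioi 0) := by
    refine IntegrableOn.congr_fun
      ((integrableOn_exp_neg_mul_div_exp_sub hz hz1 neg_one_lt_zero).const_mul z)
      (fun s _ => ?_) measurableSet_Ioi
    simp only [neg_zero, zero_mul, Real.exp_zero, ofReal_one, mul_one_div]
  have hlim : Tendsto (fun t : ℝ => Complex.log (1 - z * Real.exp (-t))) atTop
      (𝓝 (Complex.log (1 - z * (0 : ℝ)))) := by
    have hg : ContinuousAt (fun x : ℝ => Complex.log (1 - z * x)) 0 :=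
      ContinuousAt.clog (by fun_prop) (by simp [one_mem_slitPlane])
    exact hg.tendsto.comp Real.tendsto_exp_neg_atTop_nhds_zero
  have := integral_Ioi_of_hasDerivAt_of_tendsto'
    (fun s hs => hasDerivAt_log_one_sub_mul_exp_neg hz hz1 hs) hint hlim
  simp only [ofReal_zero, mul_zero, sub_zero, log_one, neg_zero, Real.exp_zero, ofReal_one,
    mul_one, zero_sub] at this
  rw [expSubIntegral, ← integral_const_mul, ← this]
  simp only [neg_zero, zero_mul, Real.exp_zero, ofReal_one, mul_one_div]

lemma expSubIntegral_eq_inv_add_mul (hz : z ≠ 1) (hz1 : ‖z‖ ≤ 1) {a : ℝ} (ha : -1 < a) :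
    expSubIntegral z a = ((a : ℂ) + 1)⁻¹ + z * expSubIntegral z (a + 1) := by
  have hsplit : Set.EqOn (fun s : ℝ => (Real.exp (-a * s) : ℂ) / ((Real.exp s : ℂ) - z))
      (fun s => (Real.exp (-(a + 1) * s) : ℂ) +
        z * ((Real.exp (-(a + 1) * s) : ℂ) / ((Real.exp s : ℂ) - z))) (Ioi 0) := by
    intro s hs
    have hne := exp_sub_ne_zero hz hz1 (le_of_lt hs)
    have hexp : (Real.exp (-a * s) : ℂ) = Real.exp (-(a + 1) * s) * Real.exp s := by
      rw [← ofReal_mul, ← Real.exp_add]; ring_nf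
    dsimp only
    rw [hexp]
    field_simp
    ring
  have hexp_int : IntegrableOn (fun s : ℝ => (Real.exp (-(a + 1) * s) : ℂ)) (Ioi 0) :=
    (exp_neg_integrableOn_Ioi 0 (by linarith)).ofReal
  rw [expSubIntegral, setIntegral_congr_fun measurableSet_Ioi hsplit,
    integral_add hexp_int
      ((integrableOn_exp_neg_mul_div_exp_sub hz hz1 (by linarith)).const_mul z),
    integral_const_mul, integral_complex_ofReal, integral_exp_neg_mul_Ioi_zero (by linarith),
    ofReal_inv, ofReal_add, ofReal_one, expSubIntegral]

end

theorem partial_sum_log_integral_general (n : ℕ) (z : ℂ) (hz : z ≠ 1)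
    (hz1 : ‖z‖ ≤ 1) :
    ∑ k ∈ Finset.range n, z ^ (k + 1) / (k + 1) =
      -Complex.log (1 - z) -
        z ^ (n + 1) *
          ∫ s in Set.Ioi (0 : ℝ),
            (Real.exp (-(n : ℝ) * s) : ℂ) / ((Real.exp s : ℂ) - z) := by
  change _ = _ - _ * expSubIntegral z n
  induction n with
  | zero => simp [← mul_expSubIntegral_zero hz hz1]
  | succ n ih =>
    rw [Finset.sum_range_succ, ih,
      expSubIntegral_eq_inv_add_mul hz hz1 (neg_one_lt_zero.trans_le n.cast_nonneg)]
    push_cast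
    ring

theorem partial_sum_log_integral (n : ℕ) (hn : 1 ≤ n) (z : ℂ) (hz : z ≠ 1)
    (hz1 : ‖z‖ ≤ 1) :
    ∑ k ∈ Finset.range n, z ^ (k + 1) / (k + 1) =
      -Complex.log (1 - z) -
        z ^ (n + 1) *
          ∫ s in Set.Ioi (0 : ℝ),
            (Real.exp (-(n : ℝ) * s) : ℂ) / ((Real.exp s : ℂ) - z) :=
  partial_sum_log_integral_general n z hz hz1
end
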